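/- Let n2 be a positive integer, 0 < p2 < p1 < 1, 0 < q1 ≤ 1 and 0 < q2 < 1 with q1/q2 ≥ p1/p2. Set n1 = (p2/p1)·n2 and suppose ⌈n1⌉ < n2 and ⌈n1⌉ ≥ 1. Then for every real x with 0 ≤ x ≤ n2·q2 − 1, F_{⌈n1⌉, q1}(x) < F_{n2, q2}(x). -/

import Mathlib

/-- The probability mass function of the Binomial(n, p) distribution. -/
noncomputable def binomPMF (n : ℕ) (p : ℝ) (k : ℕ) : ℝ :=
  (n.choose k : ℝ) * p ^ k * (1 - p) ^ (n - k)

/-- The cumulative distribution function of the Binomial(n, p) distribution,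
`F_{n,p}(x) = P(Bin(n,p) ≤ x)`. -/
noncomputable def binomCDF (n : ℕ) (p : ℝ) (x : ℝ) : ℝ :=
  ∑ k ∈ Finset.range (n + 1), if (k : ℝ) ≤ x then binomPMF n p k else 0

/-- The quantile function `F_{n,p}⁻¹(u) = inf {x : F_{n,p}(x) ≥ u}`. -/
noncomputable def binomQuantile (n : ℕ) (p : ℝ) (u : ℝ) : ℝ :=
  sInf {x : ℝ | u ≤ binomCDF n p x}

/-
Put `k = ⌊x⌋` and `c = n2 q2`, so that both sides are values `F(k)` and `k + 1 ≤ c`. Lowering the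
success probability raises `F(k)`, and `c / ⌈n1⌉ ≤ c / n1 = q2 p1 / p2 ≤ q1`; hence the left side
is at most `F_{a, c/a}(k)` with `a = ⌈n1⌉`, and it remains to see that `a ↦ F_{a, c/a}(k)` is
strictly increasing for `a ≥ c`. Write `b_{a,p}(k)` for the binomial pmf. For one step,
`F_{a+1,p}(k) = F_{a,p}(k) - p b_{a,p}(k)` and `∂ₚ F_{a+1,p}(k) = -(a+1) b_{a,p}(k)`. By the mean
value theorem on `[c/(a+1), c/a]`, an interval beyond the mode `k/a` of `p ↦ b_{a,p}(k)`, going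
down from `p = c/a` to `c/(a+1)` raises `F_{a+1,·}(k)` by more than
`(a+1)(c/a - c/(a+1)) b_{a,p}(k) = p b_{a,p}(k)`.
-/

open Finset

noncomputable def binomCDFNat (n : ℕ) (p : ℝ) (k : ℕ) : ℝ :=
  ∑ j ∈ range (k + 1), binomPMF n p j

lemma binomCDFNat_succ_right (n k : ℕ) (p : ℝ) :
    binomCDFNat n p (k + 1) = binomCDFNat n p k + binomPMF n p (k + 1) :=
  sum_range_succ _ _

lemma binomPMF_eq_zero_of_lt {n k : ℕ} (h : n < k) (p : ℝ) : binomPMF n p k = 0 := by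
  simp [binomPMF, Nat.choose_eq_zero_of_lt h]

lemma binomPMF_pos {n k : ℕ} (hk : k ≤ n) {p : ℝ} (hp0 : 0 < p) (hp1 : p < 1) :
    0 < binomPMF n p k := by
  unfold binomPMF
  have := Nat.choose_pos hk
  have : 0 < 1 - p := sub_pos.2 hp1
  positivity

lemma binomPMF_nonneg (n k : ℕ) {p : ℝ} (hp0 : 0 ≤ p) (hp1 : p ≤ 1) : 0 ≤ binomPMF n p k := by
  unfold binomPMF
  have : 0 ≤ 1 - p := sub_nonneg.2 hp1
  positivity

lemma binomCDF_eq_binomCDFNat_floor (n : ℕ) (p : ℝ) {x : ℝ} (hx : 0 ≤ x) :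
    binomCDF n p x = binomCDFNat n p ⌊x⌋₊ := by
  have hle : ∀ j : ℕ, (j : ℝ) ≤ x ↔ j ∈ range (⌊x⌋₊ + 1) := fun j => by
    rw [mem_range, Nat.lt_succ_iff, Nat.le_floor_iff hx]
  simp only [binomCDF, hle, sum_ite_mem, binomCDFNat]
  refine sum_subset inter_subset_right fun j hj hj' => binomPMF_eq_zero_of_lt ?_ p
  simp only [mem_inter, mem_range] at hj hj'
  omega

lemma binomPMF_succ_succ (n k : ℕ) (p : ℝ) :
    binomPMF (n + 1) p (k + 1) = p * binomPMF n p k + (1 - p) * binomPMF n p (k + 1) := by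
  rcases lt_or_ge k n with hk | hk
  · obtain ⟨m, rfl⟩ := Nat.exists_eq_add_of_lt hk
    simp only [binomPMF, Nat.choose_succ_succ', Nat.add_sub_add_right,
      show k + m + 1 - k = m + 1 by omega, show k + m + 1 - (k + 1) = m by omega]
    push_cast
    ring
  · simp only [binomPMF, Nat.choose_succ_succ', Nat.choose_eq_zero_of_lt (Nat.lt_succ_of_le hk),
      add_zero, Nat.reduceSubDiff, Nat.sub_eq_zero_of_le hk, pow_zero, mul_one, CharP.cast_eq_zero,
      zero_mul, mul_zero]
    ring

lemma binomCDFNat_succ (n k : ℕ) (p : ℝ) :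
    binomCDFNat (n + 1) p k = binomCDFNat n p k - p * binomPMF n p k := by
  induction k with
  | zero =>
    simp only [binomCDFNat, zero_add, range_one, sum_singleton, binomPMF, Nat.choose_zero_right,
      Nat.cast_one, pow_zero, mul_one, tsub_zero, pow_succ, one_mul]
    ring
  | succ k ih =>
    rw [binomCDFNat_succ_right, binomCDFNat_succ_right, ih, binomPMF_succ_succ]
    ring

lemma hasDerivAt_binomPMF_succ_zero (n : ℕ) (t : ℝ) :
    HasDerivAt (fun p => binomPMF (n + 1) p 0) (-((n + 1) * binomPMF n t 0)) t := by
  simp only [binomPMF, Nat.choose_zero_right, Nat.cast_one, pow_zero, one_mul, Nat.sub_zero]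
  refine (((hasDerivAt_id' t).const_sub 1).fun_pow (n + 1)).congr_deriv ?_
  push_cast
  ring

lemma hasDerivAt_binomPMF_succ_succ (n k : ℕ) (t : ℝ) :
    HasDerivAt (fun p => binomPMF (n + 1) p (k + 1))
      ((n + 1) * (binomPMF n t k - binomPMF n t (k + 1))) t := by
  have hk : ((k : ℝ) + 1) * (n + 1).choose (k + 1) = (n + 1) * n.choose k := by
    exact_mod_cast (mul_comm _ _).trans (Nat.add_one_mul_choose_eq n k).symm
  have hnk : ((n - k : ℕ) : ℝ) * (n + 1).choose (k + 1) = (n + 1) * n.choose (k + 1) := by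
    have h := Nat.choose_mul_succ_eq n (k + 1)
    rw [Nat.add_sub_add_right] at h
    exact_mod_cast (mul_comm _ _).trans (h.symm.trans (mul_comm _ _))
  simp only [binomPMF, Nat.add_sub_add_right]
  refine (((hasDerivAt_pow (k + 1) t).const_mul ((n + 1).choose (k + 1) : ℝ)).mul
    (((hasDerivAt_id' t).const_sub 1).fun_pow (n - k))).congr_deriv ?_
  rw [Nat.sub_sub, Nat.add_sub_cancel, Nat.cast_succ]
  linear_combination (t ^ k * (1 - t) ^ (n - k)) * hk - (t ^ (k + 1) * (1 - t) ^ (n - (k + 1))) * hnk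

lemma binomPMF_succ_mul {n k : ℕ} (hk : k < n) (p : ℝ) :
    binomPMF n p (k + 1) * ((k + 1) * (1 - p)) = binomPMF n p k * ((n - k) * p) := by
  obtain ⟨m, rfl⟩ := Nat.exists_eq_add_of_lt hk
  have h : ((k + m + 1).choose (k + 1) : ℝ) * (k + 1) = (k + m + 1).choose k * (m + 1) := by
    exact_mod_cast (Nat.choose_succ_right_eq (k + m + 1) k).trans (by congr 1; omega)
  simp only [binomPMF, show k + m + 1 - (k + 1) = m by omega, show k + m + 1 - k = m + 1 by omega]
  push_cast
  linear_combination (p ^ (k + 1) * (1 - p) ^ (m + 1)) * h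

lemma hasDerivAt_binomCDFNat_succ (n k : ℕ) (t : ℝ) :
    HasDerivAt (fun p => binomCDFNat (n + 1) p k) (-((n + 1) * binomPMF n t k)) t := by
  induction k with
  | zero => simpa [binomCDFNat] using hasDerivAt_binomPMF_succ_zero n t
  | succ k ih =>
    simp only [binomCDFNat_succ_right]
    exact (ih.add (hasDerivAt_binomPMF_succ_succ n k t)).congr_deriv (by ring)

lemma antitoneOn_binomCDFNat_succ (n k : ℕ) :
    AntitoneOn (fun p => binomCDFNat (n + 1) p k) (Set.Icc 0 1) :=
  antitoneOn_of_hasDerivWithinAt_nonpos (convex_Icc 0 1)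
    (fun t _ => (hasDerivAt_binomCDFNat_succ n k t).continuousAt.continuousWithinAt)
    (fun t _ => (hasDerivAt_binomCDFNat_succ n k t).hasDerivWithinAt)
    (fun t ht => by
      rw [interior_Icc] at ht
      have := binomPMF_nonneg n k ht.1.le ht.2.le
      exact neg_nonpos.2 (by positivity))

lemma strictAntiOn_binomPMF {n k : ℕ} (hk : k < n) :
    StrictAntiOn (fun p => binomPMF n p k) (Set.Icc (k / n) 1) := by
  obtain ⟨m, rfl⟩ : ∃ m, n = m + 1 := ⟨n - 1, by omega⟩
  refine strictAntiOn_of_deriv_neg (convex_Icc _ _) (by unfold binomPMF; fun_prop) fun t ht => ?_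
  rw [interior_Icc] at ht
  cases k with
  | zero =>
    rw [(hasDerivAt_binomPMF_succ_zero m t).deriv]
    have := binomPMF_pos (Nat.zero_le m) (by simpa using ht.1) ht.2
    exact neg_neg_of_pos (by positivity)
  | succ j =>
    rw [(hasDerivAt_binomPMF_succ_succ m j t).deriv]
    have hj : j < m := by omega
    have ht0 : 0 < t := lt_of_le_of_lt (by positivity) ht.1
    have hmode : (j + 1 : ℝ) < (m + 1) * t := by
      have := ht.1
      rw [div_lt_iff₀ (by positivity)] at this
      push_cast at this
      linarith
    have hpos := binomPMF_pos hj.le ht0 ht.2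
    have hw : 0 < (j + 1) * (1 - t) := mul_pos (by positivity) (sub_pos.2 ht.2)
    have hlt : binomPMF m t j < binomPMF m t (j + 1) := by
      refine lt_of_mul_lt_mul_right (a := (j + 1) * (1 - t)) ?_ hw.le
      rw [binomPMF_succ_mul hj]
      exact mul_lt_mul_of_pos_left (by nlinarith) hpos
    exact mul_neg_of_pos_of_neg (by positivity) (sub_neg.2 hlt)

lemma binomCDFNat_div_lt_succ {a k : ℕ} {c : ℝ} (hk : k + 1 ≤ c) (ha : c ≤ a) :
    binomCDFNat a (c / a) k < binomCDFNat (a + 1) (c / (a + 1)) k := by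
  have hc : 0 < c := by linarith [(Nat.cast_nonneg k : (0 : ℝ) ≤ k)]
  have ha0 : (0 : ℝ) < a := hc.trans_le ha
  have hka : k < a := by exact_mod_cast (by linarith : (k : ℝ) < a)
  set p := c / a
  set p' := c / (a + 1)
  have hp'p : p' < p := div_lt_div_of_pos_left hc ha0 (by linarith)
  have hp1 : p ≤ 1 := (div_le_one ha0).2 ha
  have hmode : (k : ℝ) / a ≤ p' := by
    rw [div_le_div_iff₀ ha0 (by positivity)]
    nlinarith
  obtain ⟨t, ht, hslope⟩ := exists_hasDerivAt_eq_slope (fun s => binomCDFNat (a + 1) s k)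
    (fun s => -((a + 1) * binomPMF a s k)) hp'p
    (fun s _ => (hasDerivAt_binomCDFNat_succ a k s).continuousAt.continuousWithinAt)
    (fun s _ => hasDerivAt_binomCDFNat_succ a k s)
  have hpmf : binomPMF a p k < binomPMF a t k :=
    strictAntiOn_binomPMF hka ⟨hmode.trans ht.1.le, ht.2.le.trans hp1⟩ ⟨hmode.trans hp'p.le, hp1⟩ ht.2
  have hwidth : (a + 1) * (p - p') = p := by
    simp only [p, p']
    field_simp
    ring
  rw [eq_div_iff (sub_ne_zero.2 hp'p.ne')] at hslope
  calc binomCDFNat a p k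
      = binomCDFNat (a + 1) p k + (a + 1) * (p - p') * binomPMF a p k := by
        rw [hwidth, binomCDFNat_succ]; ring
    _ < binomCDFNat (a + 1) p k + (a + 1) * (p - p') * binomPMF a t k := by
        have : 0 < (a + 1) * (p - p') := by rw [hwidth]; positivity
        gcongr
    _ = binomCDFNat (a + 1) p' k := by linarith

lemma binomCDFNat_div_lt_of_lt {a b k : ℕ} {c : ℝ} (hk : k + 1 ≤ c) (ha : c ≤ a) (hab : a < b) :
    binomCDFNat a (c / a) k < binomCDFNat b (c / b) k := by
  induction b, hab using Nat.le_induction with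
  | base => exact_mod_cast binomCDFNat_div_lt_succ hk ha
  | succ b hab ih =>
    have hb : c ≤ b := ha.trans (by exact_mod_cast (Nat.le_succ a).trans hab)
    exact ih.trans (by exact_mod_cast binomCDFNat_div_lt_succ hk hb)

theorem binomCDF_ceil_lt_general
    (n2 : ℕ) (hn2 : 0 < n2)
    (p1 p2 q1 q2 : ℝ)
    (hp2 : 0 < p2) (hp12 : p2 < p1)
    (hq1 : 0 < q1) (hq1' : q1 ≤ 1) (hq2 : 0 < q2)
    (hratio : q1 / q2 ≥ p1 / p2)
    (n1 : ℝ) (hn1 : n1 = (p2 / p1) * n2)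
    (hceil : ⌈n1⌉₊ < n2) (hceil1 : 1 ≤ ⌈n1⌉₊) :
    ∀ x : ℝ, 0 ≤ x → x ≤ (n2 : ℝ) * q2 - 1 →
      binomCDF ⌈n1⌉₊ q1 x < binomCDF n2 q2 x := by
  intro x hx0 hx
  set c := (n2 : ℝ) * q2
  have hk : (⌊x⌋₊ : ℝ) + 1 ≤ c := by linarith [Nat.floor_le hx0]
  have hn2' : (n2 : ℝ) ≠ 0 := by exact_mod_cast hn2.ne'
  have hn1_pos : 0 < n1 := by rw [hn1]; have := hp2.trans hp12; positivity
  have hc_div : c / ⌈n1⌉₊ ≤ q1 := calc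
    c / ⌈n1⌉₊ ≤ c / n1 := div_le_div_of_nonneg_left (by linarith) hn1_pos (Nat.le_ceil n1)
    _ = p1 / p2 * q2 := by simp only [c, hn1]; field_simp
    _ ≤ q1 := (le_div_iff₀ hq2).mp hratio
  have hc_le : c ≤ ⌈n1⌉₊ :=
    (div_le_one (by exact_mod_cast hceil1)).mp (hc_div.trans hq1')
  obtain ⟨m, hm⟩ := Nat.exists_eq_add_of_le' hceil1
  rw [binomCDF_eq_binomCDFNat_floor _ _ hx0, binomCDF_eq_binomCDFNat_floor _ _ hx0]
  calc binomCDFNat ⌈n1⌉₊ q1 ⌊x⌋₊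
      ≤ binomCDFNat ⌈n1⌉₊ (c / ⌈n1⌉₊) ⌊x⌋₊ := by
        rw [hm] at hc_div ⊢
        exact antitoneOn_binomCDFNat_succ m _ ⟨by positivity, hc_div.trans hq1'⟩
          ⟨hq1.le, hq1'⟩ hc_div
    _ < binomCDFNat n2 (c / n2) ⌊x⌋₊ := binomCDFNat_div_lt_of_lt hk hc_le hceil
    _ = binomCDFNat n2 q2 ⌊x⌋₊ := by rw [mul_div_cancel_left₀ q2 hn2']

theorem binomCDF_ceil_lt
    (n2 : ℕ) (hn2 : 0 < n2)
    (p1 p2 q1 q2 : ℝ)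
    (hp2 : 0 < p2) (hp12 : p2 < p1) (hp1 : p1 < 1)
    (hq1 : 0 < q1) (hq1' : q1 ≤ 1) (hq2 : 0 < q2) (hq2' : q2 < 1)
    (hratio : q1 / q2 ≥ p1 / p2)
    (n1 : ℝ) (hn1 : n1 = (p2 / p1) * n2)
    (hceil : ⌈n1⌉₊ < n2) (hceil1 : 1 ≤ ⌈n1⌉₊) :
    ∀ x : ℝ, 0 ≤ x → x ≤ (n2 : ℝ) * q2 - 1 →
      binomCDF ⌈n1⌉₊ q1 x < binomCDF n2 q2 x :=
  binomCDF_ceil_lt_general n2 hn2 p1 p2 q1 q2 hp2 hp12 hq1 hq1' hq2 hratio n1 hn1 hceil hceil1
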